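/- Let D be a weighted oriented graph with underlying simple graph G such that every subgraph of G has at most one perfect matching, and suppose I(D) ≠ I(G). Let 1 ≤ k ≤ ν(G) and suppose I(D)^{[k]} satisfies the Bigdeli–Herzog–Zheng connectedness criterion for being linearly related: for all minimal generators u, v of I(D)^{[k]} there is a path in G^{(u,v)} connecting u and v. Then k = ν(G). -/

import Mathlib

open MvPolynomial CategoryTheory

noncomputable section

namespace MatchingPowers

variable {K : Type} [Field K] {σ : Type*}

/-- The total degree of an exponent vector. -/
def degF (a : σ →₀ ℕ) : ℕ := a.sum fun _ e => e

/-- An ideal of a polynomial ring is a *monomial ideal* if it is generated by monomials. -/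
def IsMonomialIdeal (I : Ideal (MvPolynomial σ K)) : Prop :=
  ∃ A : Set (σ →₀ ℕ), I = Ideal.span ((fun a => (monomial a (1 : K) : MvPolynomial σ K)) '' A)

/-- The set of (exponent vectors of) minimal monomial generators of a monomial ideal `I`:
monomials of `I` such that no proper monomial divisor belongs to `I`. -/
def minGens (I : Ideal (MvPolynomial σ K)) : Set (σ →₀ ℕ) :=
  {a | (monomial a (1 : K) : MvPolynomial σ K) ∈ I ∧
    ∀ b : σ →₀ ℕ, (monomial b (1 : K) : MvPolynomial σ K) ∈ I → b ≤ a → b = a}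

/-- The `k`-th matching power of a monomial ideal: the ideal generated by all products
`u₁ ⋯ u_k` of minimal monomial generators with pairwise disjoint supports. -/
def matchingPower (I : Ideal (MvPolynomial σ K)) (k : ℕ) : Ideal (MvPolynomial σ K) :=
  Ideal.span {f | ∃ u : Fin k → (σ →₀ ℕ),
    (∀ i, u i ∈ minGens I) ∧
    (∀ i j, i ≠ j → Disjoint (u i).support (u j).support) ∧
    f = monomial (∑ i, u i) (1 : K)}

/-- The monomial grade `ν(I)`: the maximum size of a set of monomials of `I` with pairwise
disjoint supports. -/
def monomialGrade (I : Ideal (MvPolynomial σ K)) : ℕ :=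
  sSup {k | ∃ u : Fin k → (σ →₀ ℕ), Function.Injective u ∧
    (∀ i, (monomial (u i) (1 : K) : MvPolynomial σ K) ∈ I) ∧
    ∀ i j, i ≠ j → Disjoint (u i).support (u j).support}

/-- The initial degree of a monomial ideal: the least degree of a monomial belonging to it. -/
def indeg (I : Ideal (MvPolynomial σ K)) : ℕ :=
  sInf {d | ∃ a : σ →₀ ℕ, (monomial a (1 : K) : MvPolynomial σ K) ∈ I ∧ degF a = d}

/-- `deg_{x_i}(I)`: the maximum of the `x_i`-degrees of the minimal monomial generators. -/
def boundingDeg (I : Ideal (MvPolynomial σ K)) (i : σ) : ℕ :=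
  sSup {e | ∃ a ∈ minGens I, a i = e}

/-- `|deg(I)|`: the sum of the entries of the bounding multidegree of `I`. -/
def totalBoundingDeg [Fintype σ] (I : Ideal (MvPolynomial σ K)) : ℕ :=
  ∑ i, boundingDeg I i

/-- The maximal graded ideal `(x_i : i)` of the polynomial ring. -/
def varsIdeal (K : Type) [Field K] (σ : Type*) : Ideal (MvPolynomial σ K) :=
  Ideal.span (Set.range (X : σ → MvPolynomial σ K))

/-- The depth of `S/I`: the maximal length of a regular sequence on `S/I` consisting of
elements of the maximal graded ideal. -/
def depthQ (I : Ideal (MvPolynomial σ K)) : ℕ :=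
  sSup {k | ∃ rs : List (MvPolynomial σ K), rs.length = k ∧
    (∀ r ∈ rs, r ∈ varsIdeal K σ) ∧
    RingTheory.Sequence.IsRegular (MvPolynomial σ K ⧸ I) rs}

/-- The projective dimension of a module, defined through vanishing of `Ext`. -/
def pdim {R : Type} [CommRing R] (M : ModuleCat R) : ℕ∞ :=
  sInf {p : ℕ∞ | ∀ (N : ModuleCat R) (i : ℕ), p < (i : ℕ∞) →
    Subsingleton (((Ext R (ModuleCat R) i).obj (Opposite.op M)).obj N)}

/-- The projective dimension of an ideal, viewed as a module over the ring. -/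
def pdimIdeal {R : Type} [CommRing R] (I : Ideal R) : ℕ∞ :=
  pdim (ModuleCat.of R I)

/-- The normalized depth function
`g_I(k) = depth(S/I^{[k]}) + |deg(I)| - n - (indeg(I^{[k]}) - 1)`. -/
def gFun [Fintype σ] (I : Ideal (MvPolynomial σ K)) (k : ℕ) : ℤ :=
  (depthQ (matchingPower I k) : ℤ) + (totalBoundingDeg I : ℤ) - (Fintype.card σ : ℤ)
    - ((indeg (matchingPower I k) : ℤ) - 1)

/-- A monomial ideal is polymatroidal if it is generated in a single degree and the
exchange property holds for its minimal monomial generators: if `deg_{x_i} u > deg_{x_i} v`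
then `x_j · u / x_i` is a minimal generator for some `j` with `deg_{x_j} u < deg_{x_j} v`. -/
def IsPolymatroidal (I : Ideal (MvPolynomial σ K)) : Prop :=
  (∃ d, ∀ a ∈ minGens I, degF a = d) ∧
  ∀ a ∈ minGens I, ∀ b ∈ minGens I, ∀ i : σ, b i < a i →
    ∃ j : σ, a j < b j ∧ a + Finsupp.single j 1 - Finsupp.single i 1 ∈ minGens I

/-- A vertex-weighted oriented graph: a simple graph without isolated vertices, together with
an orientation of each edge and positive integer weights on the vertices, where every source
(vertex with no incoming directed edge) has weight `1`. -/
structure WOGraph (V : Type*) where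
  /-- the underlying simple graph -/
  graph : SimpleGraph V
  /-- the orientation: `dir i j` means there is a directed edge from `i` to `j` -/
  dir : V → V → Prop
  /-- the weight function -/
  w : V → ℕ
  dir_adj : ∀ ⦃i j⦄, dir i j → graph.Adj i j
  adj_dir : ∀ ⦃i j⦄, graph.Adj i j → dir i j ∨ dir j i
  not_both : ∀ ⦃i j⦄, dir i j → ¬ dir j i
  one_le_w : ∀ i, 1 ≤ w i
  source_w : ∀ i, (∀ j, ¬ dir j i) → w i = 1
  no_isolated : ∀ i, ∃ j, graph.Adj i j

variable {V : Type*}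

/-- The edge ideal of a weighted oriented graph: generated by the monomials `x_i x_j^{w j}`
for the directed edges `(i,j)`. -/
def edgeIdealD (K : Type) [Field K] (D : WOGraph V) : Ideal (MvPolynomial V K) :=
  Ideal.span {f | ∃ i j, D.dir i j ∧
    f = monomial (Finsupp.single i 1 + Finsupp.single j (D.w j)) (1 : K)}

/-- The edge ideal of a simple graph: generated by the monomials `x_i x_j` for the
edges `{i,j}`. -/
def edgeIdealG (K : Type) [Field K] (G : SimpleGraph V) : Ideal (MvPolynomial V K) :=
  Ideal.span {f | ∃ i j, G.Adj i j ∧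
    f = monomial (Finsupp.single i 1 + Finsupp.single j 1) (1 : K)}

/-- A finite set of edges of `G` which are pairwise disjoint. -/
def IsMatchingSet (G : SimpleGraph V) (M : Finset (Sym2 V)) : Prop :=
  (∀ e ∈ M, e ∈ G.edgeSet) ∧ ∀ e ∈ M, ∀ f ∈ M, e ≠ f → ∀ v, v ∈ e → v ∉ f

/-- The matching number of a simple graph: the maximum size of a matching. -/
def matchingNumber (G : SimpleGraph V) : ℕ :=
  sSup {k | ∃ M : Finset (Sym2 V), IsMatchingSet G M ∧ M.card = k}

/-- Every subgraph of `G` has at most one perfect matching (a perfect matching of a subgraph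
`H` being a matching `M ≤ H` whose vertex set is all of `H.verts`). -/
def HasAtMostOnePerfectMatching (G : SimpleGraph V) : Prop :=
  ∀ H M₁ M₂ : G.Subgraph,
    M₁ ≤ H → M₁.verts = H.verts → M₁.IsMatching →
    M₂ ≤ H → M₂.verts = H.verts → M₂.IsMatching → M₁ = M₂

/-- The maximal number of edges of an induced path in `G`. -/
def maxInducedPathLength (G : SimpleGraph V) : ℕ :=
  sSup {m | ∃ p : Fin (m + 1) → V, Function.Injective p ∧
    ∀ i j : Fin (m + 1), G.Adj (p i) (p j) ↔ ((i : ℕ) + 1 = j ∨ (j : ℕ) + 1 = i)}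

/-- The Bigdeli–Herzog–Zheng criterion for a monomial ideal `J` to be linearly related:
any two minimal monomial generators `u, v` of `J` are connected by a path in the graph
`G_J^{(u,v)}` whose vertices are the minimal generators of `J` dividing `lcm(u,v)` and whose
edges join generators `p, q` with `deg lcm(p,q) = deg p + 1 = deg q + 1`. -/
def lrCriterion (J : Ideal (MvPolynomial σ K)) : Prop :=
  ∀ a ∈ minGens J, ∀ b ∈ minGens J,
    Relation.ReflTransGen (fun p q =>
      p ∈ minGens J ∧ q ∈ minGens J ∧ p ≤ a ⊔ b ∧ q ≤ a ⊔ b ∧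
      degF (p ⊔ q) = degF p + 1 ∧ degF (p ⊔ q) = degF q + 1) a b


/-! The minimal generators of `I(D)^{[k]}` are the exponent vectors of the `k`-matchings of `D`
(directed edges `(i,j)` contributing `x_i x_j^{w_j}`). They all have `2k` variables in their
support, and since a subgraph has at most one perfect matching, a generator is determined by its
support. For two generators `p, q` adjacent in the criterion, `lcm(p,q) = q·x_s`; if `x_s`
divided `q`, then `lcm(p,q)`, `q`, and hence `p` would have the same support, forcing `p = q`.
So every variable with exponent `≥ 2` in `p` has the same exponent in `lcm(p,q)` and in `q`, and
the set of such variables is constant along the paths of the criterion. If `k < ν(G)` it is not: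
since `I(D) ≠ I(G)` there is an edge `(i,j)` with `w_j ≥ 2`, and a `(k+1)`-matching of `G`
contains both `k` edges avoiding `j` and `k - 1` edges avoiding `i` and `j`. -/

section SupportRigid

structure IsSupportRigid (S : Set (σ →₀ ℕ)) (N : ℕ) : Prop where
  card_support : ∀ a ∈ S, a.support.card = N
  injOn_support : S.InjOn Finsupp.support

lemma monomial_mem_span_monomial_image_iff {S : Set (σ →₀ ℕ)} {a : σ →₀ ℕ} :
    (monomial a (1 : K) : MvPolynomial σ K) ∈
      Ideal.span ((fun s => (monomial s (1 : K) : MvPolynomial σ K)) '' S) ↔ ∃ b ∈ S, b ≤ a := by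
  classical
  rw [mem_ideal_span_monomial_image, support_monomial, if_neg one_ne_zero]
  simp

lemma exists_eq_add_single_of_degF_eq_succ {p r : σ →₀ ℕ} (hle : p ≤ r)
    (hdeg : degF r = degF p + 1) : ∃ t, r = p + Finsupp.single t 1 := by
  have hsplit : p + (r - p) = r := add_tsub_cancel_of_le hle
  have hone : degF (r - p) = 1 := by
    have := map_add Finsupp.degree p (r - p)
    rw [hsplit] at this
    change degF r = degF p + degF (r - p) at this
    omega
  obtain ⟨t, ht⟩ := (Finsupp.sum_eq_one_iff _).1 hone
  exact ⟨t, by rw [← ht, hsplit]⟩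

namespace IsSupportRigid

variable {S : Set (σ →₀ ℕ)} {N : ℕ}

lemma minGens_span (hS : IsSupportRigid S N) :
    minGens (Ideal.span ((fun a => (monomial a (1 : K) : MvPolynomial σ K)) '' S)) = S := by
  ext a
  constructor
  · rintro ⟨ha, hmin⟩
    obtain ⟨b, hb, hba⟩ := monomial_mem_span_monomial_image_iff.1 ha
    rwa [← hmin b (monomial_mem_span_monomial_image_iff.2 ⟨b, hb, le_rfl⟩) hba]
  · intro ha
    refine ⟨monomial_mem_span_monomial_image_iff.2 ⟨a, ha, le_rfl⟩, fun b hb hba => ?_⟩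
    obtain ⟨c, hc, hcb⟩ := monomial_mem_span_monomial_image_iff.1 hb
    have hsupp : c.support = a.support :=
      Finset.eq_of_subset_of_card_le (Finsupp.support_mono (hcb.trans hba))
        (by rw [hS.card_support a ha, hS.card_support c hc])
    rw [hS.injOn_support hc ha hsupp] at hcb
    exact le_antisymm hba hcb

lemma two_le_apply_of_adj (hS : IsSupportRigid S N) {p q : σ →₀ ℕ} (hp : p ∈ S) (hq : q ∈ S)
    (hpq : degF (p ⊔ q) = degF p + 1) (hqp : degF (p ⊔ q) = degF q + 1) {x : σ}
    (hx : 2 ≤ p x) : 2 ≤ q x := by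
  classical
  obtain ⟨t, ht⟩ := exists_eq_add_single_of_degF_eq_succ le_sup_left hpq
  obtain ⟨s, hs⟩ := exists_eq_add_single_of_degF_eq_succ le_sup_right hqp
  by_contra! hqx
  have hpx := congrArg (· x) (ht.symm.trans hs)
  simp only [Finsupp.add_apply, Finsupp.single_apply] at hpx
  have hsx : s = x := by by_contra h; rw [if_neg h] at hpx; split_ifs at hpx <;> omega
  -- `x_s` divides `q`, so `p ⊔ q = q·x_s` has the support of `q` and hence that of `p`
  have hsq : (p ⊔ q).support = q.support := by
    rw [hs, Finsupp.support_add_eq_union, Finsupp.support_single _ one_ne_zero,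
      Finset.union_eq_left, Finset.singleton_subset_iff, Finsupp.mem_support_iff, hsx]
    split_ifs at hpx <;> omega
  have hps : p.support = q.support :=
    Finset.eq_of_subset_of_card_le (hsq ▸ Finsupp.support_mono le_sup_left)
      (by rw [hS.card_support p hp, hS.card_support q hq])
  rw [hS.injOn_support hp hq hps, sup_idem] at hpq
  omega

lemma two_le_apply_of_lrCriterion (hS : IsSupportRigid S N)
    (hlr : lrCriterion (Ideal.span ((fun a => (monomial a (1 : K) : MvPolynomial σ K)) '' S)))
    {a b : σ →₀ ℕ} (ha : a ∈ S) (hb : b ∈ S) {x : σ} (hx : 2 ≤ a x) : 2 ≤ b x := by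
  rw [lrCriterion, hS.minGens_span] at hlr
  have hpath : Relation.ReflTransGen (fun p q => p ∈ S ∧ q ∈ S ∧
      degF (p ⊔ q) = degF p + 1 ∧ degF (p ⊔ q) = degF q + 1) a b :=
    Relation.ReflTransGen.mono (fun _ _ ⟨hp, hq, _, _, hpq, hqp⟩ => ⟨hp, hq, hpq, hqp⟩) _ _
      (hlr a ha b hb)
  clear hb
  induction hpath with
  | refl => exact hx
  | tail _ hstep ih =>
    obtain ⟨hp, hq, hpq, hqp⟩ := hstep
    exact hS.two_le_apply_of_adj hp hq hpq hqp ih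

end IsSupportRigid

end SupportRigid

section DirectedMatchings

variable {D : WOGraph V} {m n : ℕ}

def edgeExp (D : WOGraph V) (p : V × V) : V →₀ ℕ :=
  Finsupp.single p.1 1 + Finsupp.single p.2 (D.w p.2)

lemma support_edgeExp [DecidableEq V] (p : V × V) : (edgeExp D p).support = {p.1, p.2} := by
  rw [edgeExp, Finsupp.support_add_eq_union, Finsupp.support_single _ one_ne_zero,
    Finsupp.support_single _ (Nat.one_le_iff_ne_zero.1 (D.one_le_w p.2)), Finset.insert_eq]

lemma card_support_edgeExp {p : V × V} (hp : D.dir p.1 p.2) : (edgeExp D p).support.card = 2 := by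
  classical
  rw [support_edgeExp, Finset.card_pair (D.dir_adj hp).ne]

lemma edgeExp_apply_snd {p : V × V} (hp : D.dir p.1 p.2) : edgeExp D p p.2 = D.w p.2 := by
  simp [edgeExp, (D.dir_adj hp).ne]

lemma eq_of_support_edgeExp_eq {p q : V × V} (hp : D.dir p.1 p.2) (hq : D.dir q.1 q.2)
    (h : (edgeExp D p).support = (edgeExp D q).support) : p = q := by
  classical
  rw [support_edgeExp, support_edgeExp, ← Finset.coe_inj, Finset.coe_pair, Finset.coe_pair,
    Set.pair_eq_pair_iff] at h
  rcases h with ⟨h₁, h₂⟩ | ⟨h₁, h₂⟩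
  · exact Prod.ext h₁ h₂
  · exact absurd (h₁ ▸ h₂ ▸ hp) (D.not_both hq)

lemma isSupportRigid_edgeExp :
    IsSupportRigid {a | ∃ p : V × V, D.dir p.1 p.2 ∧ edgeExp D p = a} 2 where
  card_support := by
    rintro _ ⟨p, hp, rfl⟩
    exact card_support_edgeExp hp
  injOn_support := by
    rintro _ ⟨p, hp, rfl⟩ _ ⟨q, hq, rfl⟩ h
    rw [eq_of_support_edgeExp_eq hp hq h]

variable (K) in
lemma minGens_edgeIdealD :
    minGens (edgeIdealD K D) = {a | ∃ p : V × V, D.dir p.1 p.2 ∧ edgeExp D p = a} := by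
  have hspan : edgeIdealD K D = Ideal.span ((fun a => (monomial a (1 : K) : MvPolynomial V K)) ''
      {a | ∃ p : V × V, D.dir p.1 p.2 ∧ edgeExp D p = a}) := by
    rw [edgeIdealD]
    congr 1
    ext f
    constructor
    · rintro ⟨i, j, hij, rfl⟩
      exact ⟨_, ⟨(i, j), hij, rfl⟩, rfl⟩
    · rintro ⟨_, ⟨p, hp, rfl⟩, rfl⟩
      exact ⟨p.1, p.2, hp, rfl⟩
  rw [hspan]
  exact isSupportRigid_edgeExp.minGens_span

structure IsDirMatching (D : WOGraph V) (g : Fin n → V × V) : Prop where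
  dir : ∀ i, D.dir (g i).1 (g i).2
  disjoint : Pairwise fun i j => Disjoint (edgeExp D (g i)).support (edgeExp D (g j)).support

def matchingExps (D : WOGraph V) (k : ℕ) : Set (V →₀ ℕ) :=
  {a | ∃ g : Fin k → V × V, IsDirMatching D g ∧ ∑ i, edgeExp D (g i) = a}

variable (K) in
lemma matchingPower_edgeIdealD (k : ℕ) :
    matchingPower (edgeIdealD K D) k =
      Ideal.span ((fun a => (monomial a (1 : K) : MvPolynomial V K)) '' matchingExps D k) := by
  rw [matchingPower, matchingExps]
  congr 1
  ext f
  simp only [minGens_edgeIdealD]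
  constructor
  · rintro ⟨u, hu, hdisj, rfl⟩
    choose g hg hgu using hu
    refine ⟨_, ⟨g, ⟨hg, fun i j hij => ?_⟩, rfl⟩, by simp only [hgu]⟩
    simpa only [hgu] using hdisj i j hij
  · rintro ⟨_, ⟨g, hg, rfl⟩, rfl⟩
    exact ⟨fun i => edgeExp D (g i), fun i => ⟨g i, hg.dir i, rfl⟩,
      fun i j hij => hg.disjoint hij, rfl⟩

namespace IsDirMatching

variable {g : Fin n → V × V}

lemma comp (hg : IsDirMatching D g) {f : Fin m → Fin n} (hf : Function.Injective f) :
    IsDirMatching D (g ∘ f) :=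
  ⟨fun i => hg.dir (f i), hg.disjoint.comp_of_injective hf⟩

lemma cons (hg : IsDirMatching D g) {p : V × V} (hp : D.dir p.1 p.2)
    (hpg : ∀ i, Disjoint (edgeExp D p).support (edgeExp D (g i)).support) :
    IsDirMatching D (Fin.cons p g : Fin (n + 1) → V × V) := by
  refine ⟨Fin.cases hp hg.dir, fun i j hij => ?_⟩
  cases i using Fin.cases <;> cases j using Fin.cases <;>
    simp only [Fin.cons_zero, Fin.cons_succ]
  · exact absurd rfl hij
  · exact hpg _
  · exact (hpg _).symm
  · exact hg.disjoint (ne_of_apply_ne Fin.succ hij)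

lemma injective (hg : IsDirMatching D g) : Function.Injective g := by
  intro i j hij
  by_contra hne
  have := hg.disjoint hne
  simp only [hij, disjoint_self, Finset.bot_eq_empty] at this
  simpa [this] using card_support_edgeExp (hg.dir j)

lemma support_sum [DecidableEq V] (hg : IsDirMatching D g) :
    (∑ i, edgeExp D (g i)).support = Finset.univ.biUnion fun i => (edgeExp D (g i)).support :=
  Finsupp.support_sum_eq_biUnion _ fun _ _ hij => hg.disjoint hij

lemma card_support_sum (hg : IsDirMatching D g) :
    (∑ i, edgeExp D (g i)).support.card = 2 * n := by
  classical
  rw [hg.support_sum, Finset.card_biUnion fun _ _ _ _ hij => hg.disjoint hij]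
  simp [card_support_edgeExp (hg.dir _), mul_comm]

lemma exists_succAbove_notMem {e : Fin (n + 1) → V × V} (he : IsDirMatching D e) (x : V) :
    ∃ j : Fin (n + 1), ∀ i, x ∉ (edgeExp D (e (j.succAbove i))).support := by
  by_cases hx : ∃ j, x ∈ (edgeExp D (e j)).support
  · obtain ⟨j, hj⟩ := hx
    exact ⟨j, fun i hi =>
      Finset.disjoint_left.1 (he.disjoint (Fin.succAbove_ne j i)) hi hj⟩
  · exact ⟨0, fun i hi => hx ⟨_, hi⟩⟩

def subgraph (hg : IsDirMatching D g) : D.graph.Subgraph :=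
  ⨆ i, D.graph.subgraphOfAdj (D.dir_adj (hg.dir i))

lemma verts_subgraph (hg : IsDirMatching D g) :
    hg.subgraph.verts = ↑(∑ i, edgeExp D (g i)).support := by
  classical
  simp [subgraph, hg.support_sum, support_edgeExp]

lemma isMatching_subgraph (hg : IsDirMatching D g) : hg.subgraph.IsMatching := by
  classical
  refine SimpleGraph.Subgraph.IsMatching.iSup (fun _ => .subgraphOfAdj _) fun i j hij => ?_
  have := Finset.disjoint_coe.2 (hg.disjoint hij)
  simp only [support_edgeExp, Finset.coe_pair] at this
  simpa [(SimpleGraph.Subgraph.IsMatching.subgraphOfAdj _).support_eq_verts] using this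

lemma exists_eq_of_subgraph_eq {g' : Fin m → V × V} (hg : IsDirMatching D g)
    (hg' : IsDirMatching D g') (h : hg.subgraph = hg'.subgraph) (i : Fin n) :
    ∃ j, g' j = g i := by
  have hadj : hg'.subgraph.Adj (g i).1 (g i).2 :=
    h ▸ SimpleGraph.Subgraph.iSup_adj.2 ⟨i, rfl⟩
  obtain ⟨j, hj⟩ := SimpleGraph.Subgraph.iSup_adj.1 hadj
  rcases Sym2.eq_iff.1 (hj : s((g' j).1, (g' j).2) = s((g i).1, (g i).2)) with
    ⟨h₁, h₂⟩ | ⟨h₁, h₂⟩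
  · exact ⟨j, Prod.ext h₁ h₂⟩
  · exact absurd (h₁ ▸ h₂ ▸ hg'.dir j) (D.not_both (hg.dir i))

lemma sum_eq_of_support_eq (hpm : HasAtMostOnePerfectMatching D.graph) {g' : Fin n → V × V}
    (hg : IsDirMatching D g) (hg' : IsDirMatching D g')
    (h : (∑ i, edgeExp D (g i)).support = (∑ i, edgeExp D (g' i)).support) :
    ∑ i, edgeExp D (g i) = ∑ i, edgeExp D (g' i) := by
  have hverts : hg.subgraph.verts = hg'.subgraph.verts := by
    rw [hg.verts_subgraph, hg'.verts_subgraph, h]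
  have hsub : hg.subgraph = hg'.subgraph :=
    hpm (hg.subgraph ⊔ hg'.subgraph) _ _ le_sup_left (by simp [hverts]) hg.isMatching_subgraph
      le_sup_right (by simp [hverts]) hg'.isMatching_subgraph
  choose φ hφ using hg.exists_eq_of_subgraph_eq hg' hsub
  have hφ_bij : Function.Bijective φ := Finite.injective_iff_bijective.1 fun i j hij =>
    hg.injective (by rw [← hφ i, ← hφ j, hij])
  calc ∑ i, edgeExp D (g i) = ∑ i, edgeExp D (g' (φ i)) := by simp only [hφ]
    _ = ∑ i, edgeExp D (g' i) := hφ_bij.sum_comp fun j => edgeExp D (g' j)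

end IsDirMatching

lemma isSupportRigid_matchingExps (hpm : HasAtMostOnePerfectMatching D.graph) (k : ℕ) :
    IsSupportRigid (matchingExps D k) (2 * k) where
  card_support := by
    rintro _ ⟨g, hg, rfl⟩
    exact hg.card_support_sum
  injOn_support := by
    rintro _ ⟨g, hg, rfl⟩ _ ⟨g', hg', rfl⟩ h
    exact IsDirMatching.sum_eq_of_support_eq hpm hg hg' h

lemma IsMatchingSet.exists_isDirMatching {M : Finset (Sym2 V)}
    (hM : IsMatchingSet D.graph M) : ∃ e : Fin M.card → V × V, IsDirMatching D e := by
  classical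
  have horient : ∀ s ∈ M, ∃ p : V × V, D.dir p.1 p.2 ∧ s(p.1, p.2) = s := by
    intro s hs
    induction s using Sym2.ind with
    | _ x y =>
      rcases D.adj_dir (hM.1 _ hs) with h | h
      · exact ⟨(x, y), h, rfl⟩
      · exact ⟨(y, x), h, Sym2.eq_swap⟩
  choose orient horient_dir horient_eq using horient
  let edge : Fin M.card → M := M.equivFin.symm
  refine ⟨fun i => orient _ (edge i).2, fun i => horient_dir _ _, fun i j hij => ?_⟩
  have hmem : ∀ i x, x ∈ (edgeExp D (orient _ (edge i).2)).support → x ∈ (edge i).1 := by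
    intro i x hx
    rw [← horient_eq _ (edge i).2, Sym2.mem_iff]
    simpa [support_edgeExp] using hx
  exact Finset.disjoint_left.2 fun x hxi hxj =>
    hM.2 _ (edge i).2 _ (edge j).2 (fun h => hij (M.equivFin.symm.injective (Subtype.ext h))) x
      (hmem i x hxi) (hmem j x hxj)

lemma exists_isDirMatching_of_le_matchingNumber [Fintype V] (h : n ≤ matchingNumber D.graph) :
    ∃ e : Fin n → V × V, IsDirMatching D e := by
  let sizes := {k | ∃ M : Finset (Sym2 V), IsMatchingSet D.graph M ∧ M.card = k}
  have hbdd : BddAbove sizes :=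
    ⟨Fintype.card (Sym2 V), by rintro _ ⟨M, -, rfl⟩; exact M.card_le_univ⟩
  obtain ⟨M, hM, hcard⟩ : matchingNumber D.graph ∈ sizes :=
    Nat.sSup_mem ⟨0, ∅, ⟨by simp, by simp⟩, rfl⟩ hbdd
  obtain ⟨e, he⟩ := hM.exists_isDirMatching
  exact ⟨e ∘ Fin.castLE (hcard ▸ h), he.comp (Fin.castLE_injective _)⟩

lemma exists_dir_two_le_w (hne : edgeIdealD K D ≠ edgeIdealG K D.graph) :
    ∃ p : V × V, D.dir p.1 p.2 ∧ 2 ≤ D.w p.2 := by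
  by_contra! h
  have hw : ∀ i j, D.dir i j → D.w j = 1 := fun i j hij => by
    have h₂ : D.w j < 2 := h (i, j) hij
    have := D.one_le_w j
    omega
  apply hne
  rw [edgeIdealD, edgeIdealG]
  congr 1
  ext f
  constructor
  · rintro ⟨i, j, hij, rfl⟩
    exact ⟨i, j, D.dir_adj hij, by rw [hw i j hij]⟩
  · rintro ⟨i, j, hij, rfl⟩
    rcases D.adj_dir hij with hij | hji
    · exact ⟨i, j, hij, by rw [hw i j hij]⟩
    · exact ⟨j, i, hji, by rw [hw j i hji, add_comm]⟩

end DirectedMatchings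

/-- Suppose every subgraph of the underlying graph `G` of `D` has at most
one perfect matching, `I(D) ≠ I(G)`, `1 ≤ k ≤ ν(G)`, and `I(D)^{[k]}` satisfies the
Bigdeli–Herzog–Zheng connectedness criterion for being linearly related. Then `k = ν(G)`. -/
theorem linearly_related_only_top_matchingPower (V : Type) [Fintype V] (K : Type) [Field K]
    (D : WOGraph V) (hpm : HasAtMostOnePerfectMatching D.graph)
    (hne : edgeIdealD K D ≠ edgeIdealG K D.graph)
    (k : ℕ) (hk1 : 1 ≤ k) (hk2 : k ≤ matchingNumber D.graph)
    (hlr : lrCriterion (matchingPower (edgeIdealD K D) k)) :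
    k = matchingNumber D.graph := by
  classical
  by_contra hk
  obtain ⟨k, rfl⟩ : ∃ k', k = k' + 1 := ⟨k - 1, by omega⟩
  obtain ⟨p, hp, hw⟩ := exists_dir_two_le_w hne
  obtain ⟨e, he⟩ := exists_isDirMatching_of_le_matchingNumber (D := D) (n := k + 2) (by omega)
  -- `b`: `k + 1` edges of `e` avoiding `p.2`; `a`: `p` and `k` edges of `b` avoiding `p.1`
  obtain ⟨j₁, hj₁⟩ := he.exists_succAbove_notMem p.2
  have hb := he.comp (Fin.succAbove_right_injective (p := j₁))
  obtain ⟨j₂, hj₂⟩ := hb.exists_succAbove_notMem p.1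
  have ha : IsDirMatching D
      (Fin.cons p (e ∘ j₁.succAbove ∘ j₂.succAbove) : Fin (k + 1) → V × V) :=
    (hb.comp Fin.succAbove_right_injective).cons hp fun i => by
      rw [support_edgeExp, Finset.disjoint_insert_left, Finset.disjoint_singleton_left]
      exact ⟨hj₂ i, hj₁ _⟩
  rw [matchingPower_edgeIdealD] at hlr
  have hb_heavy := (isSupportRigid_matchingExps hpm _).two_le_apply_of_lrCriterion hlr
    ⟨_, ha, rfl⟩ ⟨_, hb, rfl⟩ (x := p.2) <| by
      rw [Fin.sum_univ_succ, Fin.cons_zero, Finsupp.add_apply, edgeExp_apply_snd hp]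
      omega
  simp [Finsupp.finsetSum_apply, Finsupp.notMem_support_iff.1 (hj₁ _)] at hb_heavy

end MatchingPowers
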